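/- arXiv:math/9804016 — 10 statements merged into one kernel-verified Lean document; each statement's English description precedes it below -/
import Mathlib

section
/- Let k be a field, H a Hopf algebra over k whose antipode S satisfies S ∘ S = id, v : Matrix (Fin s) (Fin s) H a corepresentation matrix, and π : H →ₐ[k] Matrix (Fin n) (Fin n) k an algebra homomorphism. Set u := v.map π, an element of Matrix (Fin s) (Fin s) (Matrix (Fin n) (Fin n) k). Then u is invertible, its outer transpose uᵀ is invertible, and (uᵀ)⁻¹ = (u⁻¹)ᵀ; that is, u satisfies the equation (★). -/
/-!
Applying the antipode entrywise, `v.map S` is a two-sided inverse of a corepresentation matrix `v`: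
this is the antipode axiom read entry by entry, using `Δ v = v ⊗ v` and `ε v = 1`.
Since `S` is an antihomomorphism, `((A * B).map S)ᵀ = (B.map S)ᵀ * (A.map S)ᵀ`, so applying `S`
once more to these two identities and using `S ∘ S = id` shows that `(v.map S)ᵀ` is a two-sided
inverse of `vᵀ`. All four identities survive the algebra map `π`, which gives `(★)` for `v.map π`.
-/

open Matrix TensorProduct HopfAlgebra

namespace Matrix

variable {k H ι : Type*} [DecidableEq ι]

lemma map_antipode_one [CommSemiring k] [Semiring H] [HopfAlgebra k H] :
    (1 : Matrix ι ι H).map (antipode k) = 1 :=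
  Matrix.map_one _ (map_zero _) antipode_one

variable [Fintype ι]

structure IsCorepresentation (k : Type*) [CommSemiring k] [AddCommMonoid H] [Module k H]
    [Coalgebra k H] (v : Matrix ι ι H) : Prop where
  comul_apply : ∀ i j, Coalgebra.comul (R := k) (v i j) = ∑ c, v i c ⊗ₜ[k] v c j
  counit_apply : ∀ i j, Coalgebra.counit (R := k) (v i j) = if i = j then (1 : k) else 0

lemma isUnit_and_ringInverse_transpose {R : Type*} [Semiring R] {a b : Matrix ι ι R}
    (hab : a * b = 1) (hba : b * a = 1) (habT : aᵀ * bᵀ = 1) (hbaT : bᵀ * aᵀ = 1) :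
    IsUnit a ∧ IsUnit aᵀ ∧ Ring.inverse aᵀ = (Ring.inverse a)ᵀ :=
  let U : (Matrix ι ι R)ˣ := ⟨a, b, hab, hba⟩
  let UT : (Matrix ι ι R)ˣ := ⟨aᵀ, bᵀ, habT, hbaT⟩
  ⟨U.isUnit, UT.isUnit, by
    rw [show a = U from rfl, Ring.inverse_unit, show aᵀ = UT from rfl, Ring.inverse_unit]
    rfl⟩

variable [CommSemiring k] [Semiring H] [HopfAlgebra k H]

lemma transpose_map_antipode_mul {l m n : Type*} [Fintype m] (A : Matrix l m H)
    (B : Matrix m n H) :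
    ((A * B).map (antipode k))ᵀ = (B.map (antipode k))ᵀ * (A.map (antipode k))ᵀ := by
  ext i j
  simp [mul_apply, antipode_mul_antidistrib]

lemma map_antipode_map_antipode {m n : Type*} (hS : ∀ a : H, antipode k (antipode k a) = a)
    (A : Matrix m n H) : (A.map (antipode k)).map (antipode k) = A := by
  ext i j
  exact hS (A i j)

namespace IsCorepresentation

variable {v : Matrix ι ι H}

lemma map_antipode_mul_self (hv : v.IsCorepresentation k) : v.map (antipode k) * v = 1 := by
  ext i j
  have h := mul_antipode_rTensor_comul_apply (R := k) (v i j)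
  simp only [hv.comul_apply, hv.counit_apply, map_sum, LinearMap.rTensor_tmul,
    LinearMap.mul'_apply] at h
  simpa [mul_apply, one_apply, apply_ite] using h

lemma mul_map_antipode (hv : v.IsCorepresentation k) : v * v.map (antipode k) = 1 := by
  ext i j
  have h := mul_antipode_lTensor_comul_apply (R := k) (v i j)
  simp only [hv.comul_apply, hv.counit_apply, map_sum, LinearMap.lTensor_tmul,
    LinearMap.mul'_apply] at h
  simpa [mul_apply, one_apply, apply_ite] using h

lemma transpose_map_antipode_mul_transpose (hv : v.IsCorepresentation k)
    (hS : ∀ a : H, antipode k (antipode k a) = a) : (v.map (antipode k))ᵀ * vᵀ = 1 := by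
  have h := transpose_map_antipode_mul (k := k) (v.map (antipode k)) v
  rwa [hv.map_antipode_mul_self, map_antipode_one, transpose_one,
    map_antipode_map_antipode hS, eq_comm] at h

lemma transpose_mul_transpose_map_antipode (hv : v.IsCorepresentation k)
    (hS : ∀ a : H, antipode k (antipode k a) = a) : vᵀ * (v.map (antipode k))ᵀ = 1 := by
  have h := transpose_map_antipode_mul (k := k) v (v.map (antipode k))
  rwa [hv.mul_map_antipode, map_antipode_one, transpose_one,
    map_antipode_map_antipode hS, eq_comm] at h

end IsCorepresentation

end Matrix

/-- If `H` is a Hopf algebra over a field `k` with involutive antipode,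
`v` is a corepresentation matrix and `π` is an algebra homomorphism to a matrix algebra,
then `u := v.map π` satisfies the equation `(★)`: `u` is invertible, its outer transpose
`uᵀ` is invertible, and `(uᵀ)⁻¹ = (u⁻¹)ᵀ`. -/
theorem stmt0 {k : Type*} [Field k] {H : Type*} [Ring H] [HopfAlgebra k H]
    (hS : ∀ a : H, HopfAlgebra.antipode (R := k) (HopfAlgebra.antipode (R := k) a) = a)
    {s n : ℕ} (v : Matrix (Fin s) (Fin s) H)
    (hv1 : ∀ i j, Coalgebra.comul (R := k) (v i j) = ∑ c, v i c ⊗ₜ[k] v c j)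
    (hv2 : ∀ i j, Coalgebra.counit (R := k) (v i j) = if i = j then (1 : k) else 0)
    (π : H →ₐ[k] Matrix (Fin n) (Fin n) k) :
    IsUnit (v.map π) ∧ IsUnit (v.map π)ᵀ ∧
      Ring.inverse (v.map π)ᵀ = (Ring.inverse (v.map π))ᵀ := by
  have hv : v.IsCorepresentation k := ⟨hv1, hv2⟩
  have map_π {a b : Matrix (Fin s) (Fin s) H} (h : a * b = 1) : a.map π * b.map π = 1 := by
    simpa using congrArg π.mapMatrix h
  refine isUnit_and_ringInverse_transpose (b := (v.map (antipode k)).map π)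
    (map_π hv.mul_map_antipode) (map_π hv.map_antipode_mul_self) ?_ ?_
  · simpa only [transpose_map] using map_π (hv.transpose_mul_transpose_map_antipode hS)
  · simpa only [transpose_map] using map_π (hv.transpose_map_antipode_mul_transpose hS)
end

section
/- Let k be a field and u ∈ Matrix (Fin s) (Fin s) (Matrix (Fin n) (Fin n) k). Suppose there exists a model for u, i.e. a Hopf k-algebra H, a corepresentation matrix v : Matrix (Fin s) (Fin s) H, and an algebra homomorphism π : H →ₐ[k] Matrix (Fin n) (Fin n) k with v.map π = u. Then there exists a sequence w : ℕ → Matrix (Fin s) (Fin s) (Matrix (Fin n) (Fin n) k) with w 0 = u and, for every p, w p * (w (p+1))ᵀ = 1 and (w (p+1))ᵀ * w p = 1; equivalently, the sequence u₀ := u, u_{p+1} := ((u_p)⁻¹)ᵀ is defined, with every term invertible. (Theorem 1.1, (i) ⇒ (iv).) -/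
/-!
The antipode inverts a corepresentation matrix: `v * S(v) = 1 = S(v) * v` is the antipode axiom
read entrywise. Since `S` is anti-multiplicative, `M ↦ S(M)ᵀ` reverses products of square
matrices over `H`, so it maps a pair of mutually inverse matrices to a pair of mutually inverse
matrices. Iterating it from `v` gives matrices `X p` inverted by `S(X p) = (X (p+1))ᵀ`, and
`w p := π(X p)` is the required sequence.
-/

open Matrix TensorProduct HopfAlgebra

section Corepresentation

variable {k H ι : Type*} [CommSemiring k] [Semiring H]

variable (k) in
structure IsCorepMatrix [Bialgebra k H] [Fintype ι] [DecidableEq ι] (v : Matrix ι ι H) :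
    Prop where
  comul_apply : ∀ i j, Coalgebra.comul (R := k) (v i j) = ∑ c, v i c ⊗ₜ[k] v c j
  counit_apply : ∀ i j, Coalgebra.counit (R := k) (v i j) = if i = j then (1 : k) else 0

variable [HopfAlgebra k H]

variable (k) in
def antipodeTranspose (M : Matrix ι ι H) : Matrix ι ι H := (M.map (antipode k))ᵀ

theorem map_antipode_antipodeTranspose (M : Matrix ι ι H) :
    (antipodeTranspose k M).map (antipode k) = antipodeTranspose k (M.map (antipode k)) :=
  transpose_map.symm

variable [Fintype ι] [DecidableEq ι]

namespace IsCorepMatrix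

variable {v : Matrix ι ι H}

theorem mul_map_antipode (hv : IsCorepMatrix k v) : v * v.map (antipode k) = 1 := by
  ext i j
  have h := mul_antipode_lTensor_comul_apply (R := k) (v i j)
  rw [hv.comul_apply, hv.counit_apply] at h
  simpa [mul_apply, one_apply, map_sum, apply_ite (algebraMap k H)] using h

theorem map_antipode_mul (hv : IsCorepMatrix k v) : v.map (antipode k) * v = 1 := by
  ext i j
  have h := mul_antipode_rTensor_comul_apply (R := k) (v i j)
  rw [hv.comul_apply, hv.counit_apply] at h
  simpa [mul_apply, one_apply, map_sum, apply_ite (algebraMap k H)] using h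

end IsCorepMatrix

theorem antipodeTranspose_mul_eq_one {M N : Matrix ι ι H} (h : M * N = 1) :
    antipodeTranspose k N * antipodeTranspose k M = 1 := by
  ext i j
  have h' := congrArg (fun X => antipode k (X j i)) h
  simp only [mul_apply, one_apply, map_sum, antipode_mul_antidistrib, apply_ite (antipode k),
    antipode_one, map_zero] at h'
  simpa [antipodeTranspose, mul_apply, one_apply, eq_comm] using h'

theorem IsCorepMatrix.iterate_antipodeTranspose_inverse {v : Matrix ι ι H}
    (hv : IsCorepMatrix k v) (p : ℕ) :
    let X := (antipodeTranspose k)^[p] v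
    X * X.map (antipode k) = 1 ∧ X.map (antipode k) * X = 1 := by
  induction p with
  | zero => exact ⟨hv.mul_map_antipode, hv.map_antipode_mul⟩
  | succ p ih =>
    simp only [Function.iterate_succ_apply', map_antipode_antipodeTranspose]
    exact ⟨antipodeTranspose_mul_eq_one ih.2, antipodeTranspose_mul_eq_one ih.1⟩

end Corepresentation

/-- Theorem 1.1, (i) ⇒ (iv): if `u` admits a model `(H, v, π)`, then the
sequence `u₀ := u`, `u_{p+1} := ((u_p)⁻¹)ᵀ` is defined with every term invertible, i.e.
there is a sequence `w` with `w 0 = u` and `w p * (w (p+1))ᵀ = 1 = (w (p+1))ᵀ * w p`. -/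
theorem stmt2 {k : Type*} [Field k] {H : Type*} [Ring H] [HopfAlgebra k H]
    {s n : ℕ} (u : Matrix (Fin s) (Fin s) (Matrix (Fin n) (Fin n) k))
    (v : Matrix (Fin s) (Fin s) H)
    (hv1 : ∀ i j, Coalgebra.comul (R := k) (v i j) = ∑ c, v i c ⊗ₜ[k] v c j)
    (hv2 : ∀ i j, Coalgebra.counit (R := k) (v i j) = if i = j then (1 : k) else 0)
    (π : H →ₐ[k] Matrix (Fin n) (Fin n) k) (hu : v.map π = u) :
    ∃ w : ℕ → Matrix (Fin s) (Fin s) (Matrix (Fin n) (Fin n) k),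
      w 0 = u ∧ ∀ p : ℕ, w p * (w (p + 1))ᵀ = 1 ∧ (w (p + 1))ᵀ * w p = 1 := by
  have hv : IsCorepMatrix k v := ⟨hv1, hv2⟩
  refine ⟨fun p => π.mapMatrix ((antipodeTranspose k)^[p] v), hu, fun p => ?_⟩
  obtain ⟨hright, hleft⟩ := hv.iterate_antipodeTranspose_inverse p
  have htranspose : (π.mapMatrix ((antipodeTranspose k)^[p + 1] v))ᵀ =
      π.mapMatrix (((antipodeTranspose k)^[p] v).map (antipode k)) := by
    simp [Function.iterate_succ_apply', antipodeTranspose, transpose_map]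
  rw [htranspose, ← map_mul, ← map_mul, hright, hleft, map_one]
  exact ⟨rfl, rfl⟩
end

section
/- Let k be a field and let u ∈ Matrix (Fin s) (Fin s) (Matrix (Fin n) (Fin n) k) satisfy (★). Let τ denote the ordinary transpose on Matrix (Fin n) (Fin n) k, and define ū := (u⁻¹).map τ (the inverse of u with every entry transposed). Then u.map τ is invertible with inverse ū (i.e. (id⊗t)u⁻¹ = ((id⊗t)u)⁻¹), and ū itself satisfies (★): ū is invertible, ūᵀ is invertible, and (ūᵀ)⁻¹ = (ū⁻¹)ᵀ. (Lemma 2.1 (i).) -/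
open Matrix TensorProduct

section Aux
variable {k : Type*} [Field k] {s n : ℕ}

private def stmt8phi (x : Matrix (Fin s) (Fin s) (Matrix (Fin n) (Fin n) k)) :
    Matrix (Fin s) (Fin s) (Matrix (Fin n) (Fin n) k) := (x.map (fun M => Mᵀ))ᵀ

private lemma stmt8phi_eq (x : Matrix (Fin s) (Fin s) (Matrix (Fin n) (Fin n) k)) :
    stmt8phi x = xᵀ.map (fun M => Mᵀ) := by
  ext i j; simp [stmt8phi]

private lemma stmt8phi_mul (a b : Matrix (Fin s) (Fin s) (Matrix (Fin n) (Fin n) k)) :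
    stmt8phi (a * b) = stmt8phi b * stmt8phi a := by
  ext i j p q
  simp only [stmt8phi, Matrix.transpose_apply, Matrix.map_apply, Matrix.mul_apply,
    Matrix.sum_apply]
  refine Finset.sum_congr rfl fun x _ => ?_
  simp [Matrix.mul_apply, mul_comm]

private lemma stmt8phi_one : stmt8phi (1 : Matrix (Fin s) (Fin s) (Matrix (Fin n) (Fin n) k)) = 1 := by
  ext i j
  by_cases h : i = j <;> simp [stmt8phi, Matrix.one_apply, h, eq_comm]

private lemma stmt8phi_unit {x : Matrix (Fin s) (Fin s) (Matrix (Fin n) (Fin n) k)}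
    (hx : IsUnit x) : IsUnit (stmt8phi x) ∧ Ring.inverse (stmt8phi x) = stmt8phi (Ring.inverse x) := by
  have h1 : stmt8phi x * stmt8phi (Ring.inverse x) = 1 := by
    rw [← stmt8phi_mul, Ring.inverse_mul_cancel _ hx, stmt8phi_one]
  have h2 : stmt8phi (Ring.inverse x) * stmt8phi x = 1 := by
    rw [← stmt8phi_mul, Ring.mul_inverse_cancel _ hx, stmt8phi_one]
  set U : (Matrix (Fin s) (Fin s) (Matrix (Fin n) (Fin n) k))ˣ :=
    ⟨stmt8phi x, stmt8phi (Ring.inverse x), h1, h2⟩ with hU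
  refine ⟨⟨U, rfl⟩, ?_⟩
  have := Ring.inverse_unit U
  simpa [hU] using this

end Aux

/-- Lemma 2.1 (i): if `u` satisfies `(★)` and `ū := (u⁻¹).map τ` (inverse with
every `n × n` entry transposed), then `u.map τ` is invertible with inverse `ū`, and `ū`
itself satisfies `(★)`. -/
theorem stmt8 {k : Type*} [Field k] {s n : ℕ}
    (u : Matrix (Fin s) (Fin s) (Matrix (Fin n) (Fin n) k))
    (hu : IsUnit u ∧ IsUnit uᵀ ∧ Ring.inverse uᵀ = (Ring.inverse u)ᵀ)
    (ubar : Matrix (Fin s) (Fin s) (Matrix (Fin n) (Fin n) k))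
    (hubar : ubar = (Ring.inverse u).map (fun M => Mᵀ)) :
    (IsUnit (u.map (fun M => Mᵀ)) ∧ Ring.inverse (u.map (fun M => Mᵀ)) = ubar) ∧
    (IsUnit ubar ∧ IsUnit ubarᵀ ∧ Ring.inverse ubarᵀ = (Ring.inverse ubar)ᵀ) := by
  obtain ⟨hu1, hu2, hu3⟩ := hu
  have hmapu : u.map (fun M => Mᵀ) = stmt8phi uᵀ := by
    rw [stmt8phi_eq, transpose_transpose]
  have key : ∀ (x : Matrix (Fin s) (Fin s) (Matrix (Fin n) (Fin n) k)) (hx : IsUnit x),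
      IsUnit (Ring.inverse x) ∧ Ring.inverse (Ring.inverse x) = x := by
    intro x hx
    rw [Ring.inverse_of_isUnit hx]
    exact ⟨Units.isUnit _, by rw [Ring.inverse_unit, inv_inv, hx.unit_spec]⟩
  have hinvT : IsUnit (Ring.inverse uᵀ) := (key _ hu2).1
  have hinv : IsUnit (Ring.inverse u) := (key _ hu1).1
  have hub : ubar = stmt8phi (Ring.inverse uᵀ) := by
    rw [hubar, hu3, stmt8phi_eq, transpose_transpose]
  have hubT : ubarᵀ = stmt8phi (Ring.inverse u) := by
    rw [hubar, stmt8phi]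
  have hinvinvT : Ring.inverse (Ring.inverse uᵀ) = uᵀ := (key _ hu2).2
  have hinvinv : Ring.inverse (Ring.inverse u) = u := (key _ hu1).2
  obtain ⟨p1, p2⟩ := stmt8phi_unit hu2
  obtain ⟨q1, q2⟩ := stmt8phi_unit hinvT
  obtain ⟨r1, r2⟩ := stmt8phi_unit hinv
  refine ⟨⟨?_, ?_⟩, ?_, ?_, ?_⟩
  · rw [hmapu]; exact p1
  · rw [hmapu, p2, hu3, stmt8phi_eq, transpose_transpose, hubar]
  · rw [hub]; exact q1
  · rw [hubT]; exact r1
  · rw [hubT, hub, r2, q2, hinvinv, hinvinvT]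
    rw [stmt8phi_eq, stmt8phi, transpose_transpose]
end

section
/- Let k be a field and let u ∈ Matrix (Fin s) (Fin s) (Matrix (Fin n) (Fin n) k) satisfy (★). Then û := (u⁻¹)ᵀ also satisfies (★): û is invertible, ûᵀ is invertible, and (ûᵀ)⁻¹ = (û⁻¹)ᵀ, where now the outer transpose acts on the s×s indices of û. (Lemma 2.1 (ii).) -/
open Matrix

/-- Property `(★)`, with a general operation `t` in place of the partial transpose. -/
def InverseCommutesWith {M : Type*} [MonoidWithZero M] (t : M → M) (a : M) : Prop :=
  IsUnit a ∧ IsUnit (t a) ∧ Ring.inverse (t a) = t (Ring.inverse a)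

/- Only involutivity of `t` is needed: the outer transpose of a block matrix with
noncommuting blocks is not anti-multiplicative. -/
theorem InverseCommutesWith.inverse_apply {M : Type*} [MonoidWithZero M] {t : M → M}
    (ht : Function.Involutive t) {a : M} (ha : InverseCommutesWith t a) :
    InverseCommutesWith t (t (Ring.inverse a)) := by
  obtain ⟨hunit, ht_unit, hcomm⟩ := ha
  have hb : t (Ring.inverse a) = Ring.inverse (t a) := hcomm.symm
  refine ⟨?_, ?_, ?_⟩
  · rw [hb]
    exact isUnit_ringInverse.mpr ht_unit
  · rw [ht]
    exact isUnit_ringInverse.mpr hunit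
  · rw [ht, Ring.inverse_inverse hunit, hb, Ring.inverse_inverse ht_unit, ht]

/-- Lemma 2.1 (ii): if `u` satisfies `(★)`, then `û := (u⁻¹)ᵀ` also
satisfies `(★)`. -/
theorem stmt9 {k : Type*} [Field k] {s n : ℕ}
    (u : Matrix (Fin s) (Fin s) (Matrix (Fin n) (Fin n) k))
    (hu : IsUnit u ∧ IsUnit uᵀ ∧ Ring.inverse uᵀ = (Ring.inverse u)ᵀ)
    (uhat : Matrix (Fin s) (Fin s) (Matrix (Fin n) (Fin n) k))
    (huhat : uhat = (Ring.inverse u)ᵀ) :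
    IsUnit uhat ∧ IsUnit uhatᵀ ∧ Ring.inverse uhatᵀ = (Ring.inverse uhat)ᵀ := by
  subst huhat
  exact InverseCommutesWith.inverse_apply (t := transpose) (transpose_involutive _ _) hu
end

section
/- Let k be a field and let u ∈ Matrix (Fin s) (Fin s) (Matrix (Fin n) (Fin n) k) satisfy (★). Define ū := (u⁻¹).map τ, where τ is entrywise transposition on Matrix (Fin n) (Fin n) k, and define u′ ∈ Matrix (Fin s) (Fin s) (Matrix (Fin n × Fin n) (Fin n × Fin n) k) by u′ i j := Σ_c (u i c) ⊗ₖ (ū c j), where ⊗ₖ denotes the Kronecker product of n×n matrices. Then u′ (which realizes u₁₂((id⊗t)u⁻¹)₁₃ ∈ L(k^s)⊗L(k^n ⊗ (k^n)*)) satisfies (★): u′ is invertible, (u′)ᵀ is invertible, and ((u′)ᵀ)⁻¹ = ((u′)⁻¹)ᵀ. (First claim of Proposition 3.1.) -/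
open Matrix TensorProduct Kronecker

namespace Stmt10Aux

variable {k : Type*} [CommSemiring k] {s n : ℕ}

/-- entrywise transpose of block matrices: `(M.map τ) * (N.map τ) = 1` follows from
`Nᵀ * Mᵀ = 1`. -/
lemma key (M N : Matrix (Fin s) (Fin s) (Matrix (Fin n) (Fin n) k))
    (h : Nᵀ * Mᵀ = 1) :
    (M.map fun X => Xᵀ) * (N.map fun X => Xᵀ) = 1 := by
  ext i j
  have h' : ∑ c, N c j * M i c = (1 : Matrix (Fin s) (Fin s) (Matrix (Fin n) (Fin n) k)) j i := by
    have h2 := congrFun (congrFun h j) i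
    rw [Matrix.mul_apply] at h2
    simpa using h2
  rw [Matrix.mul_apply]
  simp only [Matrix.map_apply]
  have : ∑ c, (M i c)ᵀ * (N c j)ᵀ = (∑ c, N c j * M i c)ᵀ := by
    rw [Matrix.transpose_sum]
    exact Finset.sum_congr rfl fun c _ => (Matrix.transpose_mul _ _).symm
  rw [this, h']
  by_cases hij : i = j
  · subst hij; simp [Matrix.one_apply, eq_comm]
  · simp [Matrix.one_apply, hij, Ne.symm hij]

/-- `X ↦ X ⊗ₖ 1` as a ring hom. -/
def fhom (k : Type*) [CommSemiring k] (n : ℕ) :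
    Matrix (Fin n) (Fin n) k →+* Matrix (Fin n × Fin n) (Fin n × Fin n) k where
  toFun X := X ⊗ₖ (1 : Matrix (Fin n) (Fin n) k)
  map_one' := Matrix.one_kronecker_one
  map_mul' X Y := by rw [← Matrix.mul_kronecker_mul, one_mul]
  map_zero' := Matrix.zero_kronecker 1
  map_add' X Y := Matrix.add_kronecker X Y 1

/-- `Y ↦ 1 ⊗ₖ Y` as a ring hom. -/
def ghom (k : Type*) [CommSemiring k] (n : ℕ) :
    Matrix (Fin n) (Fin n) k →+* Matrix (Fin n × Fin n) (Fin n × Fin n) k where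
  toFun Y := (1 : Matrix (Fin n) (Fin n) k) ⊗ₖ Y
  map_one' := Matrix.one_kronecker_one
  map_mul' X Y := by rw [← Matrix.mul_kronecker_mul, one_mul]
  map_zero' := Matrix.kronecker_zero 1
  map_add' X Y := Matrix.kronecker_add 1 X Y

@[simp] lemma fhom_apply (X : Matrix (Fin n) (Fin n) k) : fhom k n X = X ⊗ₖ 1 := rfl
@[simp] lemma ghom_apply (Y : Matrix (Fin n) (Fin n) k) : ghom k n Y = 1 ⊗ₖ Y := rfl

lemma mulfg (M N : Matrix (Fin s) (Fin s) (Matrix (Fin n) (Fin n) k)) (i j : Fin s) :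
    ((fhom k n).mapMatrix M * (ghom k n).mapMatrix N) i j = ∑ c, M i c ⊗ₖ N c j := by
  rw [Matrix.mul_apply]
  refine Finset.sum_congr rfl fun c _ => ?_
  simp only [RingHom.mapMatrix_apply, Matrix.map_apply, fhom_apply, ghom_apply]
  rw [← Matrix.mul_kronecker_mul, mul_one, one_mul]

lemma mulgf (M N : Matrix (Fin s) (Fin s) (Matrix (Fin n) (Fin n) k)) (i j : Fin s) :
    ((ghom k n).mapMatrix M * (fhom k n).mapMatrix N) i j = ∑ c, N c j ⊗ₖ M i c := by
  rw [Matrix.mul_apply]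
  refine Finset.sum_congr rfl fun c _ => ?_
  simp only [RingHom.mapMatrix_apply, Matrix.map_apply, fhom_apply, ghom_apply]
  rw [← Matrix.mul_kronecker_mul, mul_one, one_mul]

end Stmt10Aux

open Stmt10Aux in
/-- first claim of Proposition 3.1: if `u` satisfies `(★)`,
`ū := (u⁻¹).map τ`, and `u′ i j := Σ_c (u i c) ⊗ₖ (ū c j)` (realizing
`u₁₂((id⊗t)u⁻¹)₁₃`), then `u′` satisfies `(★)`. -/
theorem stmt10 {k : Type*} [Field k] {s n : ℕ}
    (u : Matrix (Fin s) (Fin s) (Matrix (Fin n) (Fin n) k))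
    (hu : IsUnit u ∧ IsUnit uᵀ ∧ Ring.inverse uᵀ = (Ring.inverse u)ᵀ)
    (ubar : Matrix (Fin s) (Fin s) (Matrix (Fin n) (Fin n) k))
    (hubar : ubar = (Ring.inverse u).map (fun M => Mᵀ))
    (u' : Matrix (Fin s) (Fin s) (Matrix (Fin n × Fin n) (Fin n × Fin n) k))
    (hu' : ∀ i j, u' i j = ∑ c, (u i c) ⊗ₖ (ubar c j)) :
    IsUnit u' ∧ IsUnit u'ᵀ ∧ Ring.inverse u'ᵀ = (Ring.inverse u')ᵀ := by
  obtain ⟨hu1, hu2, hu3⟩ := hu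
  set v := Ring.inverse u with hv
  have huv : u * v = 1 := Ring.mul_inverse_cancel u hu1
  have hvu : v * u = 1 := Ring.inverse_mul_cancel u hu1
  have huvT : uᵀ * vᵀ = 1 := by rw [← hu3]; exact Ring.mul_inverse_cancel _ hu2
  have hvuT : vᵀ * uᵀ = 1 := by rw [← hu3]; exact Ring.inverse_mul_cancel _ hu2
  -- `ubar` is a unit, with inverse `u.map τ`
  have p1 : ubar * (u.map fun X => Xᵀ) = 1 := by rw [hubar]; exact key v u huvT
  have p2 : (u.map fun X => Xᵀ) * ubar = 1 := by rw [hubar]; exact key u v hvuT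
  -- `ubarᵀ` is a unit, with inverse `(u.map τ)ᵀ`
  have hub : ubarᵀ = vᵀ.map fun X => Xᵀ := by rw [hubar, Matrix.transpose_map]
  have huT : (u.map fun X => Xᵀ)ᵀ = uᵀ.map fun X => Xᵀ := Matrix.transpose_map.symm
  have q1 : ubarᵀ * (u.map fun X => Xᵀ)ᵀ = 1 := by
    rw [hub, huT]
    exact key vᵀ uᵀ (by simpa using huv)
  have q2 : (u.map fun X => Xᵀ)ᵀ * ubarᵀ = 1 := by
    rw [hub, huT]
    exact key uᵀ vᵀ (by simpa using hvu)
  -- units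
  have hmapT : Matrix.map u (fun X => Xᵀ) = u.map fun X => Xᵀ := rfl
  -- the unit `ubar` with explicit inverse `u.map τ`
  refine ?_
  classical
  let F : Matrix (Fin s) (Fin s) (Matrix (Fin n) (Fin n) k) →+*
      Matrix (Fin s) (Fin s) (Matrix (Fin n × Fin n) (Fin n × Fin n) k) := (fhom k n).mapMatrix
  let G : Matrix (Fin s) (Fin s) (Matrix (Fin n) (Fin n) k) →+*
      Matrix (Fin s) (Fin s) (Matrix (Fin n × Fin n) (Fin n × Fin n) k) := (ghom k n).mapMatrix
  let Ubar : (Matrix (Fin s) (Fin s) (Matrix (Fin n) (Fin n) k))ˣ :=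
    ⟨ubar, u.map fun X => Xᵀ, p1, p2⟩
  let UbarT : (Matrix (Fin s) (Fin s) (Matrix (Fin n) (Fin n) k))ˣ :=
    ⟨ubarᵀ, (u.map fun X => Xᵀ)ᵀ, q1, q2⟩
  let U' : (Matrix (Fin s) (Fin s) (Matrix (Fin n × Fin n) (Fin n × Fin n) k))ˣ :=
    Units.map F.toMonoidHom hu1.unit * Units.map G.toMonoidHom Ubar
  let U'T : (Matrix (Fin s) (Fin s) (Matrix (Fin n × Fin n) (Fin n × Fin n) k))ˣ :=
    Units.map G.toMonoidHom UbarT * Units.map F.toMonoidHom hu2.unit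
  have hU'val : U'.val = F u * G ubar := by
    show (Units.map F.toMonoidHom hu1.unit).val * (Units.map G.toMonoidHom Ubar).val = _
    rw [Units.coe_map, Units.coe_map, hu1.unit_spec]
    rfl
  have hU'Tval : U'T.val = G ubarᵀ * F uᵀ := by
    show (Units.map G.toMonoidHom UbarT).val * (Units.map F.toMonoidHom hu2.unit).val = _
    rw [Units.coe_map, Units.coe_map, hu2.unit_spec]
    rfl
  have hU' : u' = U'.val := by
    rw [hU'val]
    ext i j
    rw [hu' i j, mulfg]
  have hU'T : u'ᵀ = U'T.val := by
    rw [hU'Tval]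
    ext i j
    rw [Matrix.transpose_apply, hu' j i, mulgf]
    simp only [Matrix.transpose_apply]
  have hUuInv : (hu1.unit⁻¹).val = v := by
    rw [hv, ← Ring.inverse_unit hu1.unit, hu1.unit_spec]
  have hUuTInv : (hu2.unit⁻¹).val = vᵀ := by
    rw [← hu3, ← Ring.inverse_unit hu2.unit, hu2.unit_spec]
  have hinvU' : (U'⁻¹).val = G (u.map fun X => Xᵀ) * F v := by
    show ((Units.map F.toMonoidHom hu1.unit * Units.map G.toMonoidHom Ubar)⁻¹).val = _
    rw [_root_.mul_inv_rev, Units.val_mul, ← MonoidHom.map_inv, ← MonoidHom.map_inv,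
      Units.coe_map, Units.coe_map, hUuInv]
    rfl
  have hinvU'T : (U'T⁻¹).val = F vᵀ * G (u.map fun X => Xᵀ)ᵀ := by
    show ((Units.map G.toMonoidHom UbarT * Units.map F.toMonoidHom hu2.unit)⁻¹).val = _
    rw [_root_.mul_inv_rev, Units.val_mul, ← MonoidHom.map_inv, ← MonoidHom.map_inv,
      Units.coe_map, Units.coe_map, hUuTInv]
    rfl
  refine ⟨⟨U', hU'.symm⟩, ⟨U'T, hU'T.symm⟩, ?_⟩
  rw [hU'T, hU', Ring.inverse_unit U', Ring.inverse_unit U'T, hinvU', hinvU'T]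
  ext i j
  rw [Matrix.transpose_apply, mulfg, mulgf]
  simp only [Matrix.map_apply, Matrix.transpose_apply]
end

section
/- Let k be a field and let u ∈ Matrix (Fin s) (Fin s) (Matrix (Fin n) (Fin n) k) satisfy (★). Set û := (u⁻¹)ᵀ and define U ∈ Matrix (Fin s × Fin s) (Fin s × Fin s) (Matrix (Fin n) (Fin n) k) by U (a,b) (c,d) := (u a c) * (û b d). Then U (which realizes u₁₃ û₂₃ ∈ L(k^s ⊗ (k^s)*) ⊗ L(k^n)) satisfies (★): U is invertible, Uᵀ is invertible (transpose on the outer (Fin s × Fin s) indices), and (Uᵀ)⁻¹ = (U⁻¹)ᵀ. (Lemma 2.1 (iv), case of two factors.) -/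
open Matrix TensorProduct

private lemma key_mul {R : Type*} [Ring R] {s : ℕ}
    (x y z w : Matrix (Fin s) (Fin s) R)
    (h1 : ∀ b d, (∑ f, y b f * z d f) = if b = d then (1 : R) else 0)
    (h2 : ∀ a c, (∑ e, x a e * w e c) = if a = c then (1 : R) else 0) :
    (Matrix.of fun p q : Fin s × Fin s => x p.1 q.1 * y p.2 q.2) *
      (Matrix.of fun p q : Fin s × Fin s => z q.2 p.2 * w p.1 q.1) = 1 := by
  ext ⟨a, b⟩ ⟨c, d⟩
  rw [Matrix.mul_apply, Fintype.sum_prod_type]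
  have step : ∀ e : Fin s,
      (∑ f, (Matrix.of fun p q : Fin s × Fin s => x p.1 q.1 * y p.2 q.2) (a, b) (e, f) *
        (Matrix.of fun p q : Fin s × Fin s => z q.2 p.2 * w p.1 q.1) (e, f) (c, d))
      = x a e * ((if b = d then (1 : R) else 0) * w e c) := by
    intro e
    rw [← h1 b d, Finset.sum_mul, Finset.mul_sum]
    refine Finset.sum_congr rfl fun f _ => ?_
    simp only [Matrix.of_apply, mul_assoc]
  rw [Finset.sum_congr rfl fun e _ => step e]
  by_cases hbd : b = d
  · subst hbd
    simp [h2, Matrix.one_apply, Prod.mk.injEq]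
  · simp [hbd, Matrix.one_apply, Prod.mk.injEq]

private lemma key_mul' {R : Type*} [Ring R] {s : ℕ}
    (x y z w : Matrix (Fin s) (Fin s) R)
    (h1 : ∀ a c, (∑ e, w a e * x e c) = if a = c then (1 : R) else 0)
    (h2 : ∀ b d, (∑ f, z f b * y f d) = if b = d then (1 : R) else 0) :
    (Matrix.of fun p q : Fin s × Fin s => z q.2 p.2 * w p.1 q.1) *
      (Matrix.of fun p q : Fin s × Fin s => x p.1 q.1 * y p.2 q.2) = 1 := by
  ext ⟨a, b⟩ ⟨c, d⟩
  rw [Matrix.mul_apply, Fintype.sum_prod_type, Finset.sum_comm]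
  have step : ∀ f : Fin s,
      (∑ e, (Matrix.of fun p q : Fin s × Fin s => z q.2 p.2 * w p.1 q.1) (a, b) (e, f) *
        (Matrix.of fun p q : Fin s × Fin s => x p.1 q.1 * y p.2 q.2) (e, f) (c, d))
      = z f b * ((if a = c then (1 : R) else 0) * y f d) := by
    intro f
    rw [← h1 a c, Finset.sum_mul, Finset.mul_sum]
    refine Finset.sum_congr rfl fun e _ => ?_
    simp only [Matrix.of_apply, mul_assoc]
  rw [Finset.sum_congr rfl fun f _ => step f]
  by_cases hac : a = c
  · subst hac
    simp [h2, Matrix.one_apply, Prod.mk.injEq]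
  · simp [hac, Matrix.one_apply, Prod.mk.injEq]

/-- Lemma 2.1 (iv), two factors: if `u` satisfies `(★)`, `û := (u⁻¹)ᵀ`,
and `U (a,b) (c,d) := (u a c) * (û b d)` (realizing `u₁₃ û₂₃`), then `U` satisfies `(★)`
with respect to the outer transpose on the `(Fin s × Fin s)` indices. -/
theorem stmt11 {k : Type*} [Field k] {s n : ℕ}
    (u : Matrix (Fin s) (Fin s) (Matrix (Fin n) (Fin n) k))
    (hu : IsUnit u ∧ IsUnit uᵀ ∧ Ring.inverse uᵀ = (Ring.inverse u)ᵀ)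
    (uhat : Matrix (Fin s) (Fin s) (Matrix (Fin n) (Fin n) k))
    (huhat : uhat = (Ring.inverse u)ᵀ)
    (U : Matrix (Fin s × Fin s) (Fin s × Fin s) (Matrix (Fin n) (Fin n) k))
    (hU : ∀ a b c d, U (a, b) (c, d) = (u a c) * (uhat b d)) :
    IsUnit U ∧ IsUnit Uᵀ ∧ Ring.inverse Uᵀ = (Ring.inverse U)ᵀ := by
  obtain ⟨hu1, hu2, hu3⟩ := hu
  set v := Ring.inverse u with hv
  have huv : u * v = 1 := Ring.mul_inverse_cancel u hu1
  have hvu : v * u = 1 := Ring.inverse_mul_cancel u hu1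
  have htuv : uᵀ * vᵀ = 1 := by
    rw [← hu3]; exact Ring.mul_inverse_cancel _ hu2
  have htvu : vᵀ * uᵀ = 1 := by
    rw [← hu3]; exact Ring.inverse_mul_cancel _ hu2
  -- entrywise versions
  have e_uv : ∀ a c, (∑ e, u a e * v e c) = if a = c then 1 else 0 := by
    intro a c
    have := congrFun (congrFun huv a) c
    rwa [Matrix.mul_apply, Matrix.one_apply] at this
  have e_vu : ∀ a c, (∑ e, v a e * u e c) = if a = c then 1 else 0 := by
    intro a c
    have := congrFun (congrFun hvu a) c
    rwa [Matrix.mul_apply, Matrix.one_apply] at this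
  have e_tuv : ∀ a c, (∑ e, uᵀ a e * vᵀ e c) = if a = c then 1 else 0 := by
    intro a c
    have := congrFun (congrFun htuv a) c
    rwa [Matrix.mul_apply, Matrix.one_apply] at this
  have e_tvu : ∀ a c, (∑ e, vᵀ a e * uᵀ e c) = if a = c then 1 else 0 := by
    intro a c
    have := congrFun (congrFun htvu a) c
    rwa [Matrix.mul_apply, Matrix.one_apply] at this
  -- U in explicit form
  have hU' : U = Matrix.of fun p q : Fin s × Fin s => u p.1 q.1 * uhat p.2 q.2 := by
    ext ⟨a, b⟩ ⟨c, d⟩ i j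
    rw [hU a b c d]
    rfl
  -- the explicit inverse of U
  set V : Matrix (Fin s × Fin s) (Fin s × Fin s) (Matrix (Fin n) (Fin n) k) :=
    Matrix.of fun p q : Fin s × Fin s => u q.2 p.2 * v p.1 q.1 with hV
  have hUV : U * V = 1 := by
    rw [hU', hV]
    refine key_mul u uhat u v ?_ e_uv
    intro b d
    have h := e_tvu b d
    simp only [Matrix.transpose_apply] at h
    rw [← h]
    refine Finset.sum_congr rfl fun f _ => ?_
    rw [huhat]
    rfl
  have hVU : V * U = 1 := by
    rw [hU', hV]
    refine key_mul' u uhat u v e_vu ?_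
    intro b d
    have h := e_tuv b d
    simp only [Matrix.transpose_apply] at h
    rw [← h]
    refine Finset.sum_congr rfl fun f _ => ?_
    rw [huhat]
    rfl
  -- transpose versions
  have hUT : Uᵀ = Matrix.of fun p q : Fin s × Fin s => uᵀ p.1 q.1 * v p.2 q.2 := by
    ext ⟨a, b⟩ ⟨c, d⟩ i j
    rw [Matrix.transpose_apply, hU c d a b, huhat]
    rfl
  have hVT : Vᵀ = Matrix.of fun p q : Fin s × Fin s => uᵀ q.2 p.2 * vᵀ p.1 q.1 := by
    ext ⟨a, b⟩ ⟨c, d⟩ i j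
    rfl
  have hUTVT : Uᵀ * Vᵀ = 1 := by
    rw [hUT, hVT]
    refine key_mul uᵀ v uᵀ vᵀ ?_ e_tuv
    intro b d
    have h := e_vu b d
    rw [← h]
    refine Finset.sum_congr rfl fun f _ => ?_
    rfl
  have hVTUT : Vᵀ * Uᵀ = 1 := by
    rw [hUT, hVT]
    refine key_mul' uᵀ v uᵀ vᵀ e_tvu ?_
    intro b d
    have h := e_uv b d
    rw [← h]
    refine Finset.sum_congr rfl fun f _ => ?_
    rfl
  -- assemble
  refine ⟨⟨⟨U, V, hUV, hVU⟩, rfl⟩, ⟨⟨Uᵀ, Vᵀ, hUTVT, hVTUT⟩, rfl⟩, ?_⟩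
  have h1 : Ring.inverse U = V :=
    Ring.inverse_unit (⟨U, V, hUV, hVU⟩ :
      (Matrix (Fin s × Fin s) (Fin s × Fin s) (Matrix (Fin n) (Fin n) k))ˣ)
  have h2 : Ring.inverse Uᵀ = Vᵀ :=
    Ring.inverse_unit (⟨Uᵀ, Vᵀ, hUTVT, hVTUT⟩ :
      (Matrix (Fin s × Fin s) (Fin s × Fin s) (Matrix (Fin n) (Fin n) k))ˣ)
  rw [h1, h2]
end

section
/- Let k be a field, H a Hopf algebra over k, and π : H →ₐ[k] Matrix (Fin n) (Fin n) k an algebra homomorphism. Assume that the k-subalgebra of the convolution algebra H* := (H →ₗ[k] k) generated by the coefficient functionals { a ↦ (π a) x y : x, y ∈ Fin n } has trivial annihilator in H, i.e. if a ∈ H satisfies f a = 0 for every f in this subalgebra, then a = 0. Then for every corepresentation matrix r : Matrix (Fin s) (Fin s) H and every x ∈ Matrix (Fin s) (Fin s) k: if (x.map (algebraMap k (Matrix (Fin n) (Fin n) k))) * (r.map π) = (r.map π) * (x.map (algebraMap k (Matrix (Fin n) (Fin n) k))), then (x.map (algebraMap k H)) * r = r * (x.map (algebraMap k H)). In other words,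 End((id⊗π)r) = End(r). (Lemma 3.1.) -/
open Matrix TensorProduct

/-- The convolution product on the dual space `H* = H →ₗ[k] k` of a coalgebra:
`(f * g)(a) = (f ⊗ g)(comul a)`. -/
noncomputable def convMul {k H : Type*} [CommRing k] [Ring H] [HopfAlgebra k H]
    (f g : H →ₗ[k] k) : H →ₗ[k] k :=
  LinearMap.mul' k k ∘ₗ TensorProduct.map f g ∘ₗ Coalgebra.comul (R := k)

/-- Membership in the `k`-subalgebra of the convolution algebra `H*` generated by the
coefficient functionals `a ↦ (π a) x y` of a representation `π`.  (The unit of the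
convolution algebra is the counit.) -/
inductive InConvAlg {k H : Type*} [CommRing k] [Ring H] [HopfAlgebra k H] {n : ℕ}
    (π : H →ₐ[k] Matrix (Fin n) (Fin n) k) : (H →ₗ[k] k) → Prop
  | coeff (x y : Fin n) (f : H →ₗ[k] k) (hf : ∀ a, f a = π a x y) : InConvAlg π f
  | unit : InConvAlg π (Coalgebra.counit (R := k))
  | smul (c : k) (f : H →ₗ[k] k) : InConvAlg π f → InConvAlg π (c • f)
  | add (f g : H →ₗ[k] k) : InConvAlg π f → InConvAlg π g → InConvAlg π (f + g)
  | mul (f g : H →ₗ[k] k) : InConvAlg π f → InConvAlg π g → InConvAlg π (convMul f g)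

/-- Lemma 3.1: if the subalgebra of the convolution algebra `H*` generated
by the coefficient functionals of `π` has trivial annihilator in `H`, then for every
corepresentation matrix `r` of `H`, `End((id ⊗ π) r) = End(r)`. -/
theorem stmt12 {k : Type*} [Field k] {H : Type*} [Ring H] [HopfAlgebra k H]
    {n : ℕ} (π : H →ₐ[k] Matrix (Fin n) (Fin n) k)
    (hdense : ∀ a : H, (∀ f : H →ₗ[k] k, InConvAlg π f → f a = 0) → a = 0)
    {s : ℕ} (r : Matrix (Fin s) (Fin s) H)
    (hr1 : ∀ i j, Coalgebra.comul (R := k) (r i j) = ∑ c, r i c ⊗ₜ[k] r c j)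
    (hr2 : ∀ i j, Coalgebra.counit (R := k) (r i j) = if i = j then (1 : k) else 0)
    (x : Matrix (Fin s) (Fin s) k)
    (hx : x.map (algebraMap k (Matrix (Fin n) (Fin n) k)) * r.map π =
      r.map π * x.map (algebraMap k (Matrix (Fin n) (Fin n) k))) :
    x.map (algebraMap k H) * r = r * x.map (algebraMap k H) := by
  have key : ∀ f : H →ₗ[k] k, InConvAlg π f →
      ∀ i j : Fin s, ∑ c, x i c * f (r c j) = ∑ c, f (r i c) * x c j := by
    intro f hf
    induction hf with
    | coeff p q g hg =>
      intro i j
      have h := congrFun (congrFun hx i) j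
      simp only [Matrix.mul_apply, Matrix.map_apply] at h
      have h2 := congrFun (congrFun h p) q
      simp only [Matrix.sum_apply] at h2
      simp only [hg]
      calc ∑ c, x i c * (π (r c j)) p q
          = ∑ c, (algebraMap k (Matrix (Fin n) (Fin n) k) (x i c) * π (r c j)) p q := by
            refine Finset.sum_congr rfl fun c _ => ?_
            rw [← Algebra.smul_def]
            simp
        _ = ∑ c, (π (r i c) * algebraMap k (Matrix (Fin n) (Fin n) k) (x c j)) p q := h2
        _ = ∑ c, (π (r i c)) p q * x c j := by
            refine Finset.sum_congr rfl fun c _ => ?_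
            rw [← Algebra.commutes, ← Algebra.smul_def]
            simp [mul_comm]
    | unit =>
      intro i j
      simp [hr2, Finset.sum_ite_eq, Finset.sum_ite_eq', eq_comm]
    | smul c g hg ih =>
      intro i j
      simp only [LinearMap.smul_apply, smul_eq_mul, mul_left_comm]
      rw [← Finset.mul_sum, ih i j, Finset.mul_sum]
      refine Finset.sum_congr rfl fun t _ => by ring
    | add g g' hg hg' ihg ihg' =>
      intro i j
      simp only [LinearMap.add_apply, mul_add, add_mul, Finset.sum_add_distrib,
        ihg i j, ihg' i j]
    | mul g g' hg hg' ihg ihg' =>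
      intro i j
      have hval : ∀ a b, convMul g g' (r a b) = ∑ c, g (r a c) * g' (r c b) := by
        intro a b
        simp [convMul, hr1]
      simp only [hval]
      calc ∑ c, x i c * ∑ t, g (r c t) * g' (r t j)
          = ∑ t, (∑ c, x i c * g (r c t)) * g' (r t j) := by
            simp only [Finset.mul_sum, Finset.sum_mul, mul_assoc]
            rw [Finset.sum_comm]
        _ = ∑ t, ∑ c, g (r i c) * (x c t * g' (r t j)) := by
            refine Finset.sum_congr rfl fun t _ => ?_
            rw [ihg i t, Finset.sum_mul]
            simp [mul_assoc]
        _ = ∑ c, g (r i c) * ∑ t, x c t * g' (r t j) := by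
            rw [Finset.sum_comm]
            simp [Finset.mul_sum]
        _ = ∑ c, g (r i c) * ∑ t, g' (r c t) * x t j := by
            refine Finset.sum_congr rfl fun c _ => by rw [ihg' c j]
        _ = ∑ t, (∑ c, g (r i c) * g' (r c t)) * x t j := by
            simp only [Finset.mul_sum, Finset.sum_mul, mul_assoc]
            rw [Finset.sum_comm]
  ext i j
  rw [← sub_eq_zero]
  apply hdense
  intro f hf
  have h1 : f ((x.map (algebraMap k H) * r) i j) = ∑ c, x i c * f (r c j) := by
    simp only [Matrix.mul_apply, Matrix.map_apply, map_sum]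
    refine Finset.sum_congr rfl fun c _ => ?_
    rw [← Algebra.smul_def, f.map_smul, smul_eq_mul]
  have h2 : f ((r * x.map (algebraMap k H)) i j) = ∑ c, f (r i c) * x c j := by
    simp only [Matrix.mul_apply, Matrix.map_apply, map_sum]
    refine Finset.sum_congr rfl fun c _ => ?_
    rw [← Algebra.commutes, ← Algebra.smul_def, f.map_smul, smul_eq_mul, mul_comm]
  rw [map_sub, h1, h2, key f hf i j, sub_self]
end

section
/- Let k be a field of characteristic zero, let u ∈ Matrix (Fin m) (Fin m) (Matrix (Fin n) (Fin n) k) satisfy (★) with m ≥ 1, and set û := (u⁻¹)ᵀ. Define X ∈ Matrix (Fin m × Fin m) (Fin m × Fin m) (Matrix (Fin n) (Fin n) k) by X (a,b) (c,d) := (u a c) * (û b d), and define E ∈ Matrix (Fin m × Fin m) (Fin m × Fin m) (Matrix (Fin n) (Fin n) k) by E (a,b) (c,d) := (1/m) • (if a = b ∧ c = d then (1 : Matrix (Fin n) (Fin n) k) else 0). Then X * E = E * X. (The Jones projection e^T ⊗ 1 is fixed by conjugation by v₁₃ v̂₂₃; key step in the proof of Theorem 4.1.) -/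
open Matrix TensorProduct

/-- in characteristic zero, if `u` satisfies `(★)`, `û := (u⁻¹)ᵀ`,
`X (a,b) (c,d) := (u a c) * (û b d)` realizes `v₁₃ v̂₂₃`, and `E` is the Jones projection
`e ⊗ 1` with entries `E (a,b) (c,d) = (1/m) δ_{ab} δ_{cd}`, then `X * E = E * X`. -/
theorem stmt13 {k : Type*} [Field k] [CharZero k] {m n : ℕ} (hm : 1 ≤ m)
    (u : Matrix (Fin m) (Fin m) (Matrix (Fin n) (Fin n) k))
    (hu : IsUnit u ∧ IsUnit uᵀ ∧ Ring.inverse uᵀ = (Ring.inverse u)ᵀ)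
    (uhat : Matrix (Fin m) (Fin m) (Matrix (Fin n) (Fin n) k))
    (huhat : uhat = (Ring.inverse u)ᵀ)
    (X E : Matrix (Fin m × Fin m) (Fin m × Fin m) (Matrix (Fin n) (Fin n) k))
    (hX : ∀ a b c d, X (a, b) (c, d) = (u a c) * (uhat b d))
    (hE : ∀ a b c d, E (a, b) (c, d) =
      ((1 : k) / m) • (if a = b ∧ c = d then (1 : Matrix (Fin n) (Fin n) k) else 0)) :
    X * E = E * X := by
  obtain ⟨hu1, hu2, hu3⟩ := hu
  have h1 : u * Ring.inverse u = 1 := Ring.mul_inverse_cancel u hu1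
  have h2 : uᵀ * uhat = 1 := by rw [huhat, ← hu3]; exact Ring.mul_inverse_cancel _ hu2
  have e1 : ∀ a b, ∑ p, u a p * uhat b p = (1 : Matrix (Fin m) (Fin m) _) a b := by
    intro a b
    rw [← h1, mul_apply]
    refine Finset.sum_congr rfl fun p _ => ?_
    rw [huhat, transpose_apply]
  have e2 : ∀ c d, ∑ p, u p c * uhat p d = (1 : Matrix (Fin m) (Fin m) _) c d := by
    intro c d
    rw [← h2, mul_apply]
    simp [transpose_apply]
  ext ⟨a, b⟩ ⟨c, d⟩
  rw [mul_apply, mul_apply]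
  rw [Fintype.sum_prod_type, Fintype.sum_prod_type]
  simp only [hX, hE, mul_smul_comm, smul_mul_assoc, mul_ite, ite_mul, mul_one, one_mul,
    mul_zero, zero_mul, smul_ite, smul_zero, ite_and]
  rw [show (∑ p, ∑ q, if p = q then (if c = d then ((1:k)/m) • (u a p * uhat b q) else 0) else 0)
      = if c = d then ((1:k)/m) • ∑ p, u a p * uhat b p else 0 by
    by_cases hcd : c = d <;> simp [hcd, Finset.sum_ite_eq, Finset.smul_sum]]
  rw [show (∑ p, ∑ q, if a = b then (if p = q then ((1:k)/m) • (u p c * uhat q d) else 0) else 0)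
      = if a = b then ((1:k)/m) • ∑ p, u p c * uhat p d else 0 by
    by_cases hab : a = b <;> simp [hab, Finset.sum_ite_eq, Finset.smul_sum]]
  rw [e1, e2]
  simp [Matrix.one_apply]
  by_cases hab : a = b <;> by_cases hcd : c = d <;> simp [hab, hcd]
end

section
/- Let u ∈ Matrix (Fin m) (Fin m) (Matrix (Fin n) (Fin n) ℂ) be unitary and let Q ∈ Matrix (Fin m) (Fin m) ℂ be positive definite such that u satisfies (★_Q): uᵀ is invertible and ((Qᵀ)⁻²⊗1) * (u⁻¹)ᵀ * ((Qᵀ)²⊗1) = (uᵀ)⁻¹. Then there exists a sequence w : ℕ → Matrix (Fin m) (Fin m) (Matrix (Fin n) (Fin n) ℂ) with w 0 = u such that every w p is invertible, w (p+1) = ((w p)⁻¹)ᵀ for all p, and the closed formulas hold: w (2p) = (Q^(2p)⊗1) * u * ((Q⁻¹)^(2p)⊗1) and w (2p+1) = (((Q⁻¹)^(2p))ᵀ⊗1) * (u⁻¹)ᵀ * ((Q^(2p))ᵀ⊗1) for all p ∈ ℕ. In particular u satisfies condition (iv) of Theorem 1.1. -/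
open Matrix
open scoped ComplexOrder

/-!
Write `A = Q² ⊗ 1`, a positive definite matrix, and regard block matrices as matrices indexed by
`Fin m × Fin n`. Condition `(★_Q)` says that `uᵀ` is a right inverse of `(A u* A⁻¹)ᵀ`, and the
partial transpose preserves the trace of a product, so `tr (u A u* A⁻¹) = mn`. Hence
`A^{-1/2} (u A u*) A^{-1/2}` is positive semidefinite with trace `mn` and determinant `1`; by
AM-GM on its eigenvalues it is the identity, i.e. `u` commutes with `A`. Then
`(uᵀ)⁻¹ = (u*)ᵀ = (u⁻¹)ᵀ`, so the sequence `w` alternates between `u` and `(u⁻¹)ᵀ`, and the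
closed formulas say that `u` and `u*` commute with the powers of `A`.
-/

theorem Real.eq_one_of_sum_eq_card_of_prod_eq_one {ι : Type*} [Fintype ι] {f : ι → ℝ}
    (hf : ∀ i, 0 ≤ f i) (hsum : ∑ i, f i = Fintype.card ι) (hprod : ∏ i, f i = 1) (i : ι) :
    f i = 1 := by
  have hpos : ∀ j, 0 < f j := fun j => (hf j).lt_of_ne' fun h => by
    simp [Finset.prod_eq_zero (Finset.mem_univ j) h] at hprod
  by_contra hi
  have hlt : ∑ j, Real.log (f j) < ∑ j, (f j - 1) :=
    Finset.sum_lt_sum (fun j _ => Real.log_le_sub_one_of_pos (hpos j))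
      ⟨i, Finset.mem_univ i, Real.log_lt_sub_one_of_pos (hpos i) hi⟩
  rw [← Real.log_prod fun j _ => (hpos j).ne', hprod, Finset.sum_sub_distrib, hsum] at hlt
  simp at hlt

namespace Matrix

section RCLike

variable {ι 𝕜 : Type*} [Fintype ι] [DecidableEq ι] [RCLike 𝕜]

theorem PosSemidef.eq_one_of_trace_eq_card_of_det_eq_one {T : Matrix ι ι 𝕜}
    (hT : T.PosSemidef) (htr : T.trace = Fintype.card ι) (hdet : T.det = 1) : T = 1 := by
  have hH := hT.isHermitian
  have hone : ∀ i, hH.eigenvalues i = 1 :=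
    Real.eq_one_of_sum_eq_card_of_prod_eq_one hT.eigenvalues_nonneg
      (by exact_mod_cast hH.trace_eq_sum_eigenvalues.symm.trans htr)
      (by exact_mod_cast hH.det_eq_prod_eigenvalues.symm.trans hdet)
  rw [hH.spectral_theorem]
  simp [Function.comp_def, hone]

open scoped MatrixOrder in
theorem PosDef.commute_of_trace_conj_mul_inv_eq_card {U B : Matrix ι ι 𝕜}
    (hU : U ∈ unitary (Matrix ι ι 𝕜)) (hB : B.PosDef)
    (htr : (U * B * star U * B⁻¹).trace = Fintype.card ι) : Commute U B := by
  have hBdet : IsUnit B.det := (isUnit_iff_isUnit_det B).mp hB.isUnit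
  set S := CFC.sqrt B⁻¹
  have hS : S.PosSemidef := (CFC.sqrt_nonneg _).posSemidef
  have hSS : S * S = B⁻¹ := CFC.sqrt_mul_sqrt_self _ hB.inv.posSemidef.nonneg
  set X := U * B * star U
  have hT : (S * X * S).PosSemidef := by
    simpa [hS.isHermitian.eq, X, star_eq_conjTranspose] using
      (hB.posSemidef.mul_mul_conjTranspose_same U).mul_mul_conjTranspose_same S
  have htrT : (S * X * S).trace = Fintype.card ι := by
    rw [mul_assoc, trace_mul_comm, mul_assoc, hSS, htr]
  have hdetT : (S * X * S).det = 1 := by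
    have hSB : S.det * S.det * B.det = 1 := by
      rw [← det_mul, hSS, ← det_mul, nonsing_inv_mul _ hBdet, det_one]
    have hUU : (star U).det * U.det = 1 := by
      rw [← det_mul, Unitary.star_mul_self_of_mem hU, det_one]
    simp only [X, det_mul]
    linear_combination S.det * S.det * B.det * hUU + hSB
  have hX : X = B := by
    calc X = B * (S * S) * X * (S * S) * B := by
          rw [hSS, mul_nonsing_inv _ hBdet, one_mul, nonsing_inv_mul_cancel_right B X hBdet]
      _ = B * S * (S * X * S) * S * B := by simp only [mul_assoc]
      _ = B := by
          rw [hT.eq_one_of_trace_eq_card_of_det_eq_one htrT hdetT, mul_one, mul_assoc B,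
            hSS, mul_nonsing_inv _ hBdet, one_mul]
  calc U * B = X * U := by simp only [X, mul_assoc, Unitary.star_mul_self_of_mem hU, mul_one]
    _ = B * U := by rw [hX]

end RCLike

section ScalarBlocks

variable {l m n R A : Type*} [CommSemiring R] [Semiring A] [Algebra R A]

theorem transpose_map_algebraMap_mul [Fintype m] (M : Matrix l m R) (x : Matrix m n A) :
    (M.map (algebraMap R A) * x)ᵀ = xᵀ * (M.map (algebraMap R A))ᵀ := by
  ext a b
  simp only [transpose_apply, mul_apply, map_apply]
  exact Finset.sum_congr rfl fun c _ => Algebra.commutes _ _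

theorem transpose_mul_map_algebraMap [Fintype m] (x : Matrix l m A) (M : Matrix m n R) :
    (x * M.map (algebraMap R A))ᵀ = (M.map (algebraMap R A))ᵀ * xᵀ := by
  ext a b
  simp only [transpose_apply, mul_apply, map_apply]
  exact Finset.sum_congr rfl fun c _ => (Algebra.commutes _ _).symm

theorem transpose_map_algebraMap_mul_mul_map_algebraMap {p : Type*} [Fintype m] [Fintype n]
    (M : Matrix l m R) (x : Matrix m n A) (N : Matrix n p R) :
    (M.map (algebraMap R A) * x * N.map (algebraMap R A))ᵀ =
      Nᵀ.map (algebraMap R A) * xᵀ * Mᵀ.map (algebraMap R A) := by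
  rw [transpose_mul_map_algebraMap, transpose_map_algebraMap_mul, transpose_map, transpose_map,
    Matrix.mul_assoc]

theorem IsHermitian.commute_star_of_commute_map_algebraMap [Fintype m] [StarRing R] [StarRing A]
    [StarModule R A] {P : Matrix m m R} (hP : P.IsHermitian) {x : Matrix m m A}
    (hx : Commute x (P.map (algebraMap R A))) : Commute (star x) (P.map (algebraMap R A)) := by
  simpa only [(hP.map _ (algebraMap_star_comm ·)).isSelfAdjoint.star_eq] using hx.star_star

end ScalarBlocks

theorem map_pow_mul_mul_map_inv_pow_of_commute {ι R S : Type*} [Fintype ι] [DecidableEq ι]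
    [CommRing R] [Semiring S] (f : R →+* S) {M : Matrix ι ι R} (hM : IsUnit M.det)
    {x : Matrix ι ι S} (hx : Commute x (M.map f)) (k : ℕ) :
    (M ^ k).map f * x * (M⁻¹ ^ k).map f = x := by
  have hxk : Commute x ((M ^ k).map f) := by
    rw [← RingHom.mapMatrix_apply, map_pow]
    exact hx.pow_right k
  rw [← hxk.eq, mul_assoc, ← Matrix.map_mul, inv_pow',
    mul_nonsing_inv _ (by rw [det_pow]; exact hM.pow k),
    Matrix.map_one _ (map_zero f) (map_one f), mul_one]

section Comp

open scoped Kronecker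

variable {I J R : Type*} [Fintype J]

theorem comp_map_algebraMap {I' : Type*} [CommSemiring R] [DecidableEq J] (M : Matrix I I' R) :
    comp I I' J J R (M.map (algebraMap R (Matrix J J R))) = M ⊗ₖ 1 := by
  ext ⟨a, i⟩ ⟨b, j⟩
  simp [algebraMap_matrix_apply, one_apply]

variable [Fintype I]

theorem trace_compRingEquiv_transpose_mul_transpose [NonUnitalNonAssocSemiring R]
    (x y : Matrix I I (Matrix J J R)) :
    (compRingEquiv I J R (xᵀ * yᵀ)).trace = (compRingEquiv I J R (x * y)).trace := by
  simp only [trace, diag_apply, compRingEquiv_apply, comp_apply, mul_apply, transpose_apply,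
    sum_apply, Fintype.sum_prod_type]
  refine (Finset.sum_congr rfl fun _ _ => Finset.sum_comm).trans ?_
  exact Finset.sum_comm.trans (Finset.sum_congr rfl fun _ _ => Finset.sum_comm)

theorem commute_map_algebraMap_of_mul_transpose_eq_one {𝕜 : Type*} [RCLike 𝕜] [DecidableEq I]
    [DecidableEq J] {u : Matrix I I (Matrix J J 𝕜)} (hu : u ∈ unitary (Matrix I I (Matrix J J 𝕜)))
    {P : Matrix I I 𝕜} (hP : P.PosDef)
    (h : uᵀ * (P.map (algebraMap 𝕜 _) * star u * P⁻¹.map (algebraMap 𝕜 _))ᵀ = 1) :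
    Commute u (P.map (algebraMap 𝕜 (Matrix J J 𝕜))) := by
  set A := P.map (algebraMap 𝕜 (Matrix J J 𝕜))
  set A' := P⁻¹.map (algebraMap 𝕜 (Matrix J J 𝕜))
  set φ := compRingEquiv I J 𝕜
  have hB : (φ A).PosDef := by
    rw [compRingEquiv_apply, comp_map_algebraMap]
    exact hP.kronecker PosDef.one
  have hinv : φ A' = (φ A)⁻¹ := by
    refine (inv_eq_left_inv ?_).symm
    rw [← map_mul, ← Matrix.map_mul, nonsing_inv_mul _ ((isUnit_iff_isUnit_det P).mp hP.isUnit),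
      Matrix.map_one _ (map_zero _) (map_one _), map_one]
  have hstar : φ (star u) = star (φ u) := rfl
  have hU : φ u ∈ unitary (Matrix (I × J) (I × J) 𝕜) := by
    rw [Unitary.mem_iff, ← hstar, ← map_mul, ← map_mul, Unitary.star_mul_self_of_mem hu,
      Unitary.mul_star_self_of_mem hu, map_one, and_self]
  have htr : (φ u * φ A * star (φ u) * (φ A)⁻¹).trace = Fintype.card (I × J) := by
    rw [← hinv, ← hstar, ← map_mul, ← map_mul, ← map_mul, mul_assoc, mul_assoc, ← mul_assoc A,
      ← trace_compRingEquiv_transpose_mul_transpose, h, map_one, trace_one]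
  show u * A = A * u
  apply φ.injective
  rw [map_mul, map_mul]
  exact (hB.commute_of_trace_conj_mul_inv_eq_card hU htr).eq

theorem commute_map_algebraMap_sq_and_ring_inverse_transpose {𝕜 : Type*} [RCLike 𝕜]
    [DecidableEq I] [DecidableEq J] {u : Matrix I I (Matrix J J 𝕜)}
    (hu : u ∈ unitary (Matrix I I (Matrix J J 𝕜))) {Q : Matrix I I 𝕜} (hQ : Q.PosDef)
    (hut : IsUnit uᵀ)
    (h : ((Qᵀ ^ 2)⁻¹).map (algebraMap 𝕜 _) * (Ring.inverse u)ᵀ * (Qᵀ ^ 2).map (algebraMap 𝕜 _) =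
      Ring.inverse uᵀ) :
    Commute u ((Q ^ 2).map (algebraMap 𝕜 (Matrix J J 𝕜))) ∧
      Ring.inverse uᵀ = (Ring.inverse u)ᵀ := by
  have hinv : Ring.inverse u = star u := Ring.inverse_unit (Unitary.toUnits ⟨u, hu⟩)
  have hQ2 : (Q ^ 2).PosDef := (hQ.posSemidef.pow 2).posDef_iff_isUnit.mpr (hQ.isUnit.pow 2)
  rw [← transpose_pow, ← transpose_nonsing_inv, hinv,
    ← transpose_map_algebraMap_mul_mul_map_algebraMap] at h
  have hcomm := commute_map_algebraMap_of_mul_transpose_eq_one hu hQ2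
    (by rw [h]; exact Ring.mul_inverse_cancel _ hut)
  refine ⟨hcomm, ?_⟩
  rw [← h, ← (hQ2.isHermitian.commute_star_of_commute_map_algebraMap hcomm).eq, mul_assoc,
    ← Matrix.map_mul, mul_nonsing_inv _ ((isUnit_iff_isUnit_det _).mp hQ2.isUnit),
    Matrix.map_one _ (map_zero _) (map_one _), mul_one, hinv]

end Comp

section TransposeInverse

variable {I α : Type*} [Fintype I] [DecidableEq I] [Semiring α] {u : Matrix I I α}

theorem iterate_transpose_ring_inverse_two_mul (hut : IsUnit uᵀ)
    (h : Ring.inverse uᵀ = (Ring.inverse u)ᵀ) (p : ℕ) :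
    (fun x : Matrix I I α => (Ring.inverse x)ᵀ)^[2 * p] u = u := by
  have hper : Function.IsPeriodicPt (fun x : Matrix I I α => (Ring.inverse x)ᵀ) 2 u := by
    show (Ring.inverse (Ring.inverse u)ᵀ)ᵀ = u
    rw [← h, Ring.inverse_inverse hut, transpose_transpose]
  exact (hper.mul_const p).eq

theorem iterate_transpose_ring_inverse_two_mul_add_one (hut : IsUnit uᵀ)
    (h : Ring.inverse uᵀ = (Ring.inverse u)ᵀ) (p : ℕ) :
    (fun x : Matrix I I α => (Ring.inverse x)ᵀ)^[2 * p + 1] u = (Ring.inverse u)ᵀ := by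
  rw [Function.iterate_succ_apply', iterate_transpose_ring_inverse_two_mul hut h]

theorem isUnit_iterate_transpose_ring_inverse (hu : IsUnit u) (hut : IsUnit uᵀ)
    (h : Ring.inverse uᵀ = (Ring.inverse u)ᵀ) (p : ℕ) :
    IsUnit ((fun x : Matrix I I α => (Ring.inverse x)ᵀ)^[p] u) := by
  obtain ⟨k, rfl | rfl⟩ := Nat.even_or_odd' p
  · rwa [iterate_transpose_ring_inverse_two_mul hut h]
  · rw [iterate_transpose_ring_inverse_two_mul_add_one hut h, ← h]
    exact hut.ringInverse

end TransposeInverse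

end Matrix

/-- a twisted biunitary `u` (unitary and satisfying `(★_Q)` for a positive
definite `Q`) satisfies condition (iv) of Theorem 1.1: the sequence `w 0 = u`,
`w (p+1) = ((w p)⁻¹)ᵀ` is defined with every term invertible, and the closed formulas
`w (2p) = (Q^{2p}⊗1) u ((Q⁻¹)^{2p}⊗1)` and
`w (2p+1) = (((Q⁻¹)^{2p})ᵀ⊗1) (u⁻¹)ᵀ ((Q^{2p})ᵀ⊗1)` hold. -/
theorem stmt16 {m n : ℕ}
    (u : Matrix (Fin m) (Fin m) (Matrix (Fin n) (Fin n) ℂ))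
    (hu : star u * u = 1 ∧ u * star u = 1)
    (Q : Matrix (Fin m) (Fin m) ℂ) (hQ : Q.PosDef)
    (hstarQ : IsUnit uᵀ ∧
      (((Qᵀ) ^ 2)⁻¹).map (algebraMap ℂ (Matrix (Fin n) (Fin n) ℂ)) * (Ring.inverse u)ᵀ *
          ((Qᵀ) ^ 2).map (algebraMap ℂ (Matrix (Fin n) (Fin n) ℂ)) = Ring.inverse uᵀ) :
    ∃ w : ℕ → Matrix (Fin m) (Fin m) (Matrix (Fin n) (Fin n) ℂ),
      w 0 = u ∧
      (∀ p : ℕ, IsUnit (w p)) ∧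
      (∀ p : ℕ, w (p + 1) = (Ring.inverse (w p))ᵀ) ∧
      (∀ p : ℕ, w (2 * p) =
        (Q ^ (2 * p)).map (algebraMap ℂ (Matrix (Fin n) (Fin n) ℂ)) * u *
          ((Q⁻¹) ^ (2 * p)).map (algebraMap ℂ (Matrix (Fin n) (Fin n) ℂ))) ∧
      (∀ p : ℕ, w (2 * p + 1) =
        (((Q⁻¹) ^ (2 * p))ᵀ).map (algebraMap ℂ (Matrix (Fin n) (Fin n) ℂ)) *
          (Ring.inverse u)ᵀ *
          ((Q ^ (2 * p))ᵀ).map (algebraMap ℂ (Matrix (Fin n) (Fin n) ℂ))) := by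
  obtain ⟨hcomm, hinvT⟩ := commute_map_algebraMap_sq_and_ring_inverse_transpose
    (Unitary.mem_iff.mpr hu) hQ hstarQ.1 hstarQ.2
  have hcomm_star := (hQ.isHermitian.pow 2).commute_star_of_commute_map_algebraMap hcomm
  have hinv_u : Ring.inverse u = star u := Ring.inverse_unit ⟨u, star u, hu.2, hu.1⟩
  have hQ2det : IsUnit (Q ^ 2).det := (isUnit_iff_isUnit_det _).mp (hQ.isUnit.pow 2)
  have hconj (p : ℕ) (x : Matrix (Fin m) (Fin m) (Matrix (Fin n) (Fin n) ℂ))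
      (hx : Commute x ((Q ^ 2).map (algebraMap ℂ _))) :
      (Q ^ (2 * p)).map (algebraMap ℂ _) * x * (Q⁻¹ ^ (2 * p)).map (algebraMap ℂ _) = x := by
    rw [pow_mul, pow_mul, inv_pow' Q 2]
    exact map_pow_mul_mul_map_inv_pow_of_commute _ hQ2det hx p
  refine ⟨fun p => (fun x => (Ring.inverse x)ᵀ)^[p] u, rfl,
    isUnit_iterate_transpose_ring_inverse ⟨⟨u, star u, hu.2, hu.1⟩, rfl⟩ hstarQ.1 hinvT,
    fun p => Function.iterate_succ_apply' _ p u, fun p => ?_, fun p => ?_⟩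
  · dsimp only
    rw [iterate_transpose_ring_inverse_two_mul hstarQ.1 hinvT, hconj p u hcomm]
  · dsimp only
    rw [iterate_transpose_ring_inverse_two_mul_add_one hstarQ.1 hinvT, hinv_u,
      ← transpose_map_algebraMap_mul_mul_map_algebraMap, hconj p _ hcomm_star]
end

section
/- Let k be a field, d ≥ 1, and let G be a subgroup of GL (Fin d) k. Let F be the k-subalgebra of the algebra of functions G → k (with pointwise operations) generated by the coordinate functions g ↦ ((g : Matrix (Fin d) (Fin d) k) i j) and g ↦ (((g⁻¹ : G) : Matrix (Fin d) (Fin d) k) i j) for i, j ∈ Fin d. Then for every nonzero element x of the group algebra MonoidAlgebra k G there exists f ∈ F such that Σ_{g ∈ x.support} (x g) * (f g) ≠ 0. (Right-faithfulness of the group algebra model (kG, w, ν) of Proposition 2.2 (i): the subalgebra generated by the coefficients of the fundamental representation is dense in (kG)*.) -/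
open Matrix

/-! A subalgebra of `k`-valued functions that separates points contains, for every finite set
`s` and `a ∈ s`, a function equal to `1` at `a` and to `0` on the rest of `s` (a product of
normalised separating functions). Pairing a nonzero `x ∈ kG` with such a function for
`a ∈ supp x` yields the coefficient `x a ≠ 0`; and the matrix-entry functions separate the
points of a subgroup of `GL d k`. -/

namespace Subalgebra

variable {α k : Type*} [Field k] (F : Subalgebra k (α → k))

theorem exists_apply_eq_one_apply_eq_zero {a b : α} {f : α → k} (hf : f ∈ F) (hab : f a ≠ f b) :
    ∃ φ ∈ F, φ a = 1 ∧ φ b = 0 := by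
  refine ⟨(f a - f b)⁻¹ • (f - algebraMap k (α → k) (f b)),
    F.smul_mem (F.sub_mem hf (F.algebraMap_mem _)) _, ?_, ?_⟩
  · simp [inv_mul_cancel₀ (sub_ne_zero.mpr hab)]
  · simp

variable {F}

theorem exists_apply_eq_one_forall_apply_eq_zero (hF : ∀ a b : α, a ≠ b → ∃ f ∈ F, f a ≠ f b)
    (s : Finset α) (a : α) : ∃ φ ∈ F, φ a = 1 ∧ ∀ b ∈ s, b ≠ a → φ b = 0 := by
  classical
  have hpair : ∀ b, ∃ φ ∈ F, b ≠ a → φ a = 1 ∧ φ b = 0 := fun b => by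
    by_cases hb : b = a
    · exact ⟨1, F.one_mem, fun h => absurd hb h⟩
    · obtain ⟨f, hf, hab⟩ := hF a b (Ne.symm hb)
      obtain ⟨φ, hφ, h⟩ := F.exists_apply_eq_one_apply_eq_zero hf hab
      exact ⟨φ, hφ, fun _ => h⟩
  choose φ hφF hφ using hpair
  refine ⟨∏ b ∈ s.erase a, φ b, prod_mem fun b _ => hφF b, ?_, fun b hb hba => ?_⟩
  · rw [Finset.prod_apply]
    exact Finset.prod_eq_one fun b hb => (hφ b (Finset.ne_of_mem_erase hb)).1
  · rw [Finset.prod_apply]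
    exact Finset.prod_eq_zero (Finset.mem_erase.mpr ⟨hba, hb⟩) (hφ b hba).2

theorem exists_sum_mul_ne_zero (hF : ∀ a b : α, a ≠ b → ∃ f ∈ F, f a ≠ f b)
    {x : α →₀ k} (hx : x ≠ 0) : ∃ f ∈ F, ∑ a ∈ x.support, x a * f a ≠ 0 := by
  obtain ⟨a, ha⟩ := Finsupp.support_nonempty_iff.mpr hx
  obtain ⟨φ, hφF, hφa, hφ⟩ := exists_apply_eq_one_forall_apply_eq_zero hF x.support a
  refine ⟨φ, hφF, ?_⟩
  rw [Finset.sum_eq_single a (fun b hb hba => by rw [hφ b hb hba, mul_zero])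
    (fun h => absurd ha h), hφa, mul_one]
  exact Finsupp.mem_support_iff.mp ha

end Subalgebra

theorem Subgroup.exists_val_apply_ne {k : Type*} {d : ℕ} [CommRing k]
    {G : Subgroup (GL (Fin d) k)} {g h : G} (hgh : g ≠ h) :
    ∃ i j : Fin d, (g : GL (Fin d) k).val i j ≠ (h : GL (Fin d) k).val i j := by
  by_contra! hcon
  exact hgh (Subtype.ext (Units.ext (Matrix.ext hcon)))

theorem stmt18_general {k : Type*} [Field k] {d : ℕ}
    (G : Subgroup (GL (Fin d) k)) :
    ∀ x : MonoidAlgebra k G, x ≠ 0 →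
      ∃ f ∈ Algebra.adjoin k
        {f : G → k | ∃ i j : Fin d,
          (f = fun g : G => (g : GL (Fin d) k).val i j) ∨
          (f = fun g : G => ((g⁻¹ : G) : GL (Fin d) k).val i j)},
        (∑ g ∈ x.coeff.support, x.coeff g * f g) ≠ 0 := by
  intro x hx
  refine Subalgebra.exists_sum_mul_ne_zero (fun g h hgh => ?_)
    (fun h => hx (MonoidAlgebra.coeff_eq_zero.mp h))
  obtain ⟨i, j, hij⟩ := Subgroup.exists_val_apply_ne hgh
  exact ⟨_, Algebra.subset_adjoin ⟨i, j, Or.inl rfl⟩, hij⟩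

/-- right-faithfulness of the group algebra model, Proposition 2.2 (i):
for a subgroup `G ⊆ GL(d, k)`, the subalgebra `F` of the algebra of functions `G → k`
generated by the coordinate functions `g ↦ g i j` and `g ↦ (g⁻¹) i j` is dense in
`(kG)* = k(G)`: every nonzero element of the group algebra `kG` is non-annihilated by
some `f ∈ F`. -/
theorem stmt18 {k : Type*} [Field k] {d : ℕ} (hd : 1 ≤ d)
    (G : Subgroup (GL (Fin d) k)) :
    ∀ x : MonoidAlgebra k G, x ≠ 0 →
      ∃ f ∈ Algebra.adjoin k
        {f : G → k | ∃ i j : Fin d,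
          (f = fun g : G => (g : GL (Fin d) k).val i j) ∨
          (f = fun g : G => ((g⁻¹ : G) : GL (Fin d) k).val i j)},
        (∑ g ∈ x.coeff.support, x.coeff g * f g) ≠ 0 :=
  stmt18_general G
end
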